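/- Suppose there exist rational trigonometric polynomials q₁,…,q_r such that for all γ ∈ Γ* and all ω where both sides are defined, S(M^Tω)τ(ω) conj(τ(ω+γ)) + Σ_ℓ q_ℓ(ω) conj(q_ℓ(ω+γ)) equals S(ω) if γ = 0 and 0 otherwise. Then the oblique sub-QMF condition holds: Σ_{γ∈Γ*} |τ(ω+γ)|²/S(ω+γ) ≤ 1/S(M^Tω) for all ω at which both sides are defined. -/

import Mathlib

noncomputable section

/-- A (complex-valued) trigonometric polynomial in `n` variables: a finite linear
combination of the exponentials `ω ↦ e^{i k·ω}`, `k ∈ ℤⁿ`. -/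
def IsTrigPoly {n : ℕ} (f : (Fin n → ℝ) → ℂ) : Prop :=
  ∃ (s : Finset (Fin n → ℤ)) (c : (Fin n → ℤ) → ℂ),
    ∀ ω, f ω = ∑ k ∈ s, c k * Complex.exp (Complex.I * ∑ j, (k j : ℂ) * (ω j : ℂ))

/-- A real-valued trigonometric polynomial in `n` variables: a finite linear
combination of `cos(k·ω)` and `sin(k·ω)`, `k ∈ ℤⁿ`. -/
def IsTrigPolyR {n : ℕ} (f : (Fin n → ℝ) → ℝ) : Prop :=
  ∃ (s : Finset (Fin n → ℤ)) (a b : (Fin n → ℤ) → ℝ),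
    ∀ ω, f ω = ∑ k ∈ s,
      (a k * Real.cos (∑ j, (k j : ℝ) * ω j) + b k * Real.sin (∑ j, (k j : ℝ) * ω j))

/-- `M ∈ Mₙ(ℤ)` is a dilation matrix: all of its (complex) eigenvalues have
modulus strictly greater than 1. -/
def IsDilation {n : ℕ} (M : Matrix (Fin n) (Fin n) ℤ) : Prop :=
  ∀ μ : ℂ, ((M.map (Int.cast : ℤ → ℂ)).charpoly).IsRoot μ → 1 < ‖μ‖

/-- The action `ω ↦ Mᵀ ω` of the transposed dilation matrix on `ℝⁿ`. -/
def MT {n : ℕ} (M : Matrix (Fin n) (Fin n) ℤ) (ω : Fin n → ℝ) : Fin n → ℝ :=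
  (M.map (Int.cast : ℤ → ℝ)).transpose.mulVec ω

/-- `Γ* ⊂ ℝⁿ` is a complete set of distinct coset representatives of
`(2π M⁻ᵀ ℤⁿ)/(2π ℤⁿ)` containing `0`. -/
def FreqReps {n : ℕ} (M : Matrix (Fin n) (Fin n) ℤ) (Γstar : Finset (Fin n → ℝ)) : Prop :=
  (0 : Fin n → ℝ) ∈ Γstar ∧
  (∀ γ ∈ Γstar, ∃ m : Fin n → ℤ, ∀ i,
    γ i = 2 * Real.pi
      * ((M.map (Int.cast : ℤ → ℝ))⁻¹.transpose.mulVec (fun j => (m j : ℝ)) i)) ∧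
  (∀ m : Fin n → ℤ, ∃! γ, γ ∈ Γstar ∧ ∃ l : Fin n → ℤ, ∀ i,
    2 * Real.pi * ((M.map (Int.cast : ℤ → ℝ))⁻¹.transpose.mulVec (fun j => (m j : ℝ)) i)
      = γ i + 2 * Real.pi * (l i : ℝ))

/-- `Γ ⊂ ℤⁿ` is a complete set of distinct coset representatives of `ℤⁿ/Mℤⁿ`. -/
def SpatialReps {n : ℕ} (M : Matrix (Fin n) (Fin n) ℤ) (Γ : Finset (Fin n → ℤ)) : Prop :=
  ∀ m : Fin n → ℤ, ∃! ν, ν ∈ Γ ∧ ∃ l : Fin n → ℤ, m = ν + M.mulVec l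

/-!
Since `Γ*` is a complete set of representatives of `2πM⁻ᵀℤⁿ / 2πℤⁿ` and all masks are
`2πℤⁿ`-periodic, the OEP identities at the points `ω + γ`, `γ ∈ Γ*`, say that
`diag(S(ω + γ)) - S(Mᵀω) H H* = Q Q*` with `H = (τ(ω + γ))_γ` and `Q = (q_ℓ(ω + γ))_{γ,ℓ}`.
Testing this positive semidefinite matrix against `x = diag(S(ω + γ))⁻¹ H` gives
`t - S(Mᵀω) t² ≥ 0` for `t = Σ_γ |τ(ω + γ)|² / S(ω + γ)`, hence `t ≤ 1 / S(Mᵀω)`.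

The OEP identities are only available where no denominator of a `q_ℓ` vanishes. These
denominators are nonzero trigonometric polynomials, hence real analytic, so that set is dense
and the inequality extends to every admissible `ω` by continuity.
-/

open Complex Matrix Filter Topology
open scoped ComplexOrder ComplexConjugate Pointwise

theorem sum_norm_sq_div_le_inv_of_posSemidef {ι : Type*} [Fintype ι] [DecidableEq ι]
    {s : ι → ℝ} (hs : ∀ i, 0 < s i) {A : ℝ} (hA : 0 < A) (h : ι → ℂ)
    (hpsd : (diagonal (fun i => (s i : ℂ)) - (A : ℂ) • vecMulVec h (star h)).PosSemidef) :
    ∑ i, ‖h i‖ ^ 2 / s i ≤ A⁻¹ := by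
  set t := ∑ i, ‖h i‖ ^ 2 / s i
  set x : ι → ℂ := fun i => h i / s i
  have hdiag : diagonal (fun i => (s i : ℂ)) *ᵥ x = h := by
    ext i
    simp [x, mulVec_diagonal, mul_div_cancel₀ _ (ofReal_ne_zero.mpr (hs i).ne')]
  have hxh : star x ⬝ᵥ h = t := by
    simp only [t, x, dotProduct, ofReal_sum, Pi.star_apply, RCLike.star_def, map_div₀, conj_ofReal]
    refine Finset.sum_congr rfl fun i _ => ?_
    rw [div_mul_eq_mul_div, conj_mul', ofReal_div, ofReal_pow]
  have hhx : star h ⬝ᵥ x = t := by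
    rw [star_dotProduct, hxh, RCLike.star_def, conj_ofReal]
  have key := hpsd.dotProduct_mulVec_nonneg x
  rw [sub_mulVec, smul_mulVec, vecMulVec_mulVec, hdiag, dotProduct_sub, dotProduct_smul,
    op_smul_eq_smul, dotProduct_smul, hxh, hhx] at key
  simp only [smul_eq_mul] at key
  have key' : 0 ≤ t - A * (t * t) := by exact_mod_cast key
  have ht : 0 ≤ t := Finset.sum_nonneg fun i _ => by have := hs i; positivity
  rw [← one_div, le_div_iff₀ hA]
  by_contra! hlt
  nlinarith

theorem sum_norm_sq_div_le_inv_of_gram {ι κ : Type*} [Fintype ι] [Fintype κ] [DecidableEq ι]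
    {s : ι → ℝ} (hs : ∀ i, 0 < s i) {A : ℝ} (hA : 0 < A) (h : ι → ℂ) (q : κ → ι → ℂ)
    (hgram : ∀ i j, A * h i * conj (h j) + ∑ ℓ, q ℓ i * conj (q ℓ j) =
      if i = j then (s i : ℂ) else 0) :
    ∑ i, ‖h i‖ ^ 2 / s i ≤ A⁻¹ := by
  refine sum_norm_sq_div_le_inv_of_posSemidef hs hA h ?_
  convert posSemidef_self_mul_conjTranspose (of fun i ℓ => q ℓ i) using 1
  ext i j
  simp only [Matrix.sub_apply, Matrix.smul_apply, diagonal_apply, vecMulVec_apply, mul_apply,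
    of_apply, conjTranspose_apply, Pi.star_apply, RCLike.star_def, smul_eq_mul]
  linear_combination (hgram i j).symm

theorem le_of_continuousAt_of_dense {X α : Type*} [TopologicalSpace X] [TopologicalSpace α]
    [LinearOrder α] [OrderClosedTopology α] {f g : X → α} {D : Set X} (hD : Dense D) {x : X}
    (hf : ContinuousAt f x) (hg : ContinuousAt g x) (h : ∀ᶠ y in 𝓝 x, y ∈ D → f y ≤ g y) :
    f x ≤ g x :=
  haveI := mem_closure_iff_nhdsWithin_neBot.mp (hD x)
  le_of_tendsto_of_tendsto (hf.mono_left nhdsWithin_le_nhds) (hg.mono_left nhdsWithin_le_nhds)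
    (eventually_nhdsWithin_iff.mpr h)

def twoPiIntVec {n : ℕ} (l : Fin n → ℤ) : Fin n → ℝ := fun i => 2 * Real.pi * l i

def IsTwoPiPeriodic {n : ℕ} {α : Type*} (f : (Fin n → ℝ) → α) : Prop :=
  ∀ l : Fin n → ℤ, Function.Periodic f (twoPiIntVec l)

section

variable {n : ℕ}

theorem IsTwoPiPeriodic.div {α : Type*} [Div α] {f g : (Fin n → ℝ) → α}
    (hf : IsTwoPiPeriodic f) (hg : IsTwoPiPeriodic g) :
    IsTwoPiPeriodic fun v => f v / g v :=
  fun l => (hf l).div (hg l)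

theorem sum_intCast_mul_add_twoPiIntVec (k l : Fin n → ℤ) (v : Fin n → ℝ) :
    ∑ j, (k j : ℝ) * (v + twoPiIntVec l) j =
      ∑ j, (k j : ℝ) * v j + (∑ j, k j * l j : ℤ) * (2 * Real.pi) := by
  simp only [twoPiIntVec, Pi.add_apply, mul_add, Finset.sum_add_distrib, Int.cast_sum,
    Int.cast_mul, Finset.sum_mul]
  congr 1
  exact Finset.sum_congr rfl fun j _ => by ring

theorem sum_intCast_mul_ofReal (k : Fin n → ℤ) (ω : Fin n → ℝ) :
    ∑ j, (k j : ℂ) * (ω j : ℂ) = ((∑ j, (k j : ℝ) * ω j : ℝ) : ℂ) := by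
  push_cast; rfl

namespace IsTrigPoly

variable {f : (Fin n → ℝ) → ℂ}

theorem analyticAt (hf : IsTrigPoly f) (x : Fin n → ℝ) : AnalyticAt ℝ f x := by
  obtain ⟨s, c, hc⟩ := hf
  have hphase (k : Fin n → ℤ) : AnalyticAt ℝ (fun ω : Fin n → ℝ => ∑ j, (k j : ℝ) * ω j) x :=
    Finset.analyticAt_fun_sum _ fun j _ =>
      analyticAt_const.mul ((ContinuousLinearMap.proj (R := ℝ) j).analyticAt x)
  rw [funext hc]
  refine Finset.analyticAt_fun_sum _ fun k _ => analyticAt_const.mul ?_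
  simp_rw [sum_intCast_mul_ofReal]
  exact analyticAt_cexp.restrictScalars.comp
    (analyticAt_const.mul (ofRealCLM.analyticAt _ |>.comp (hphase k)))

theorem continuous (hf : IsTrigPoly f) : Continuous f :=
  continuous_iff_continuousAt.mpr fun x => (hf.analyticAt x).continuousAt

theorem isTwoPiPeriodic (hf : IsTrigPoly f) : IsTwoPiPeriodic f := by
  obtain ⟨s, c, hc⟩ := hf
  intro l v
  simp only [hc, sum_intCast_mul_ofReal, sum_intCast_mul_add_twoPiIntVec]
  refine Finset.sum_congr rfl fun k _ => ?_
  rw [mul_comm I, mul_comm I, ofReal_add, ofReal_mul, ofReal_intCast, ofReal_mul, ofReal_ofNat]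
  exact congrArg _ (exp_mul_I_periodic.int_mul _ _)

theorem dense_setOf_ne_zero (hf : IsTrigPoly f) (hne : ∃ ω, f ω ≠ 0) :
    Dense {ω | f ω ≠ 0} := by
  intro x
  rw [mem_closure_iff_frequently]
  by_contra hzero
  simp only [not_frequently, Set.mem_ofPred_eq, not_not] at hzero
  obtain ⟨ω, hω⟩ := hne
  exact hω <| AnalyticOnNhd.eqOn_zero_of_preconnected_of_eventuallyEq_zero
    (fun y _ => hf.analyticAt y) isPreconnected_univ (Set.mem_univ x) hzero (Set.mem_univ ω)

end IsTrigPoly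

namespace IsTrigPolyR

variable {f : (Fin n → ℝ) → ℝ}

theorem continuous (hf : IsTrigPolyR f) : Continuous f := by
  obtain ⟨s, a, b, h⟩ := hf
  rw [funext h]
  fun_prop

theorem isTwoPiPeriodic (hf : IsTrigPolyR f) : IsTwoPiPeriodic f := by
  obtain ⟨s, a, b, h⟩ := hf
  intro l v
  simp only [h, sum_intCast_mul_add_twoPiIntVec, Real.cos_add_int_mul_two_pi,
    Real.sin_add_int_mul_two_pi]

end IsTrigPolyR

theorem dense_setOf_forall_trigPoly_add_ne_zero {ι : Type*} [Finite ι]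
    {f : ι → (Fin n → ℝ) → ℂ} (hf : ∀ i, IsTrigPoly (f i)) (hne : ∀ i, ∃ ω, f i ω ≠ 0)
    (C : Finset (Fin n → ℝ)) :
    Dense {ω | ∀ i, ∀ c ∈ C, f i (ω + c) ≠ 0} := by
  simp only [Set.ofPred_forall]
  refine dense_iInter_of_isOpen (fun i => isOpen_biInter_finset fun c _ => ?_)
    (fun i => dense_biInter_of_isOpen (fun c _ => ?_) C.countable_toSet fun c _ => ?_)
  · exact isOpen_ne.preimage ((hf i).continuous.comp (continuous_add_const c))
  · exact isOpen_ne.preimage ((hf i).continuous.comp (continuous_add_const c))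
  · exact ((hf i).dense_setOf_ne_zero (hne i)).preimage (isOpenMap_add_right c)

theorem IsDilation.isUnit_det {M : Matrix (Fin n) (Fin n) ℤ} (hM : IsDilation M) :
    IsUnit (M.map (Int.cast : ℤ → ℝ)).det := by
  have h0 : ¬ (M.map (Int.cast : ℤ → ℂ)).charpoly.IsRoot 0 := fun h => absurd (hM 0 h) (by norm_num)
  rw [← mem_spectrum_iff_isRoot_charpoly, spectrum.zero_mem_iff, not_not,
    isUnit_iff_isUnit_det, isUnit_iff_ne_zero, ← Int.cast_det, Int.cast_ne_zero] at h0
  rw [isUnit_iff_ne_zero, ← Int.cast_det, Int.cast_ne_zero]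
  exact h0

namespace FreqReps

variable {M : Matrix (Fin n) (Fin n) ℤ} {Γ : Finset (Fin n → ℝ)}

theorem eq_of_eq_add_twoPiIntVec (hΓ : FreqReps M Γ) {γ₁ γ₂ : Fin n → ℝ} (h₁ : γ₁ ∈ Γ)
    (h₂ : γ₂ ∈ Γ) {l : Fin n → ℤ} (h : γ₁ = γ₂ + twoPiIntVec l) : γ₁ = γ₂ := by
  obtain ⟨m, hm⟩ := hΓ.2.1 γ₁ h₁
  exact (hΓ.2.2 m).unique ⟨h₁, 0, fun i => by rw [← hm i]; simp⟩
    ⟨h₂, l, fun i => by rw [← hm i, h]; rfl⟩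

theorem exists_eq_add_add_twoPiIntVec (hΓ : FreqReps M Γ) {γ ρ : Fin n → ℝ} (hγ : γ ∈ Γ)
    (hρ : ρ ∈ Γ) : ∃ δ ∈ Γ, ∃ l : Fin n → ℤ, ρ = γ + δ + twoPiIntVec l := by
  obtain ⟨mγ, hmγ⟩ := hΓ.2.1 γ hγ
  obtain ⟨mρ, hmρ⟩ := hΓ.2.1 ρ hρ
  obtain ⟨δ, ⟨hδ, l, hl⟩, -⟩ := hΓ.2.2 (mρ - mγ)
  have hsub : (fun j => ((mρ - mγ) j : ℝ)) = (fun j => (mρ j : ℝ)) - fun j => (mγ j : ℝ) := by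
    ext j; simp
  refine ⟨δ, hδ, l, funext fun i => ?_⟩
  have := hl i
  rw [hsub, mulVec_sub, Pi.sub_apply] at this
  simp only [twoPiIntVec, Pi.add_apply]
  linarith [hmγ i, hmρ i]

theorem MT_eq_twoPiIntVec (hΓ : FreqReps M Γ) (hM : IsUnit (M.map (Int.cast : ℤ → ℝ)).det)
    {γ : Fin n → ℝ} (hγ : γ ∈ Γ) : ∃ m : Fin n → ℤ, MT M γ = twoPiIntVec m := by
  obtain ⟨m, hm⟩ := hΓ.2.1 γ hγ
  have hγ' : γ = (2 * Real.pi) • ((M.map (Int.cast : ℤ → ℝ))⁻¹ᵀ *ᵥ fun j => (m j : ℝ)) :=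
    funext hm
  refine ⟨m, ?_⟩
  rw [MT, hγ', mulVec_smul, mulVec_mulVec, ← transpose_mul, nonsing_inv_mul _ hM,
    transpose_one, one_mulVec]
  rfl

theorem gram_of_oep (hΓ : FreqReps M Γ) {κ : Type*} [Fintype κ] {τ : (Fin n → ℝ) → ℂ}
    {q : κ → (Fin n → ℝ) → ℂ} (hτ : IsTwoPiPeriodic τ) (hq : ∀ ℓ, IsTwoPiPeriodic (q ℓ))
    {ω : Fin n → ℝ} {A : ℝ} {s : (Fin n → ℝ) → ℝ}
    (hOEP : ∀ γ ∈ Γ, ∀ δ ∈ Γ,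
      A * τ (ω + γ) * conj (τ (ω + γ + δ)) + ∑ ℓ, q ℓ (ω + γ) * conj (q ℓ (ω + γ + δ)) =
        if δ = 0 then (s (ω + γ) : ℂ) else 0)
    {γ ρ : Fin n → ℝ} (hγ : γ ∈ Γ) (hρ : ρ ∈ Γ) :
    A * τ (ω + γ) * conj (τ (ω + ρ)) + ∑ ℓ, q ℓ (ω + γ) * conj (q ℓ (ω + ρ)) =
      if γ = ρ then (s (ω + γ) : ℂ) else 0 := by
  obtain ⟨δ, hδ, l, rfl⟩ := hΓ.exists_eq_add_add_twoPiIntVec hγ hρ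
  have hiff : γ = γ + δ + twoPiIntVec l ↔ δ = 0 := by
    refine ⟨fun h => hΓ.eq_of_eq_add_twoPiIntVec hδ hΓ.1 (l := -l) ?_, fun h => ?_⟩
    · ext i
      have := congrFun h i
      simp only [twoPiIntVec, Pi.add_apply, Pi.neg_apply, Pi.zero_apply, Int.cast_neg] at this ⊢
      linarith
    · subst h
      exact (hΓ.eq_of_eq_add_twoPiIntVec hρ hγ (by rw [add_zero])).symm
  have hτl : ∀ x, τ (x + twoPiIntVec l) = τ x := hτ l
  have hql : ∀ ℓ x, q ℓ (x + twoPiIntVec l) = q ℓ x := fun ℓ => hq ℓ l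
  rw [← add_assoc, ← add_assoc]
  simp only [hτl, hql, hiff]
  exact hOEP γ hγ δ hδ

theorem sum_norm_sq_div_le_inv_of_oep (hΓ : FreqReps M Γ) {κ : Type*} [Fintype κ]
    {τ : (Fin n → ℝ) → ℂ} {q : κ → (Fin n → ℝ) → ℂ} (hτ : IsTwoPiPeriodic τ)
    (hq : ∀ ℓ, IsTwoPiPeriodic (q ℓ)) {ω : Fin n → ℝ} {A : ℝ} (hA : 0 < A)
    {s : (Fin n → ℝ) → ℝ} (hs : ∀ γ ∈ Γ, 0 < s (ω + γ))
    (hOEP : ∀ γ ∈ Γ, ∀ δ ∈ Γ,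
      A * τ (ω + γ) * conj (τ (ω + γ + δ)) + ∑ ℓ, q ℓ (ω + γ) * conj (q ℓ (ω + γ + δ)) =
        if δ = 0 then (s (ω + γ) : ℂ) else 0) :
    ∑ γ ∈ Γ, ‖τ (ω + γ)‖ ^ 2 / s (ω + γ) ≤ A⁻¹ := by
  rw [← Finset.sum_coe_sort Γ]
  refine sum_norm_sq_div_le_inv_of_gram (fun γ : Γ => hs γ γ.2) hA _ (fun ℓ γ => q ℓ (ω + γ))
    fun γ ρ => ?_
  simp only [hΓ.gram_of_oep hτ hq hOEP γ.2 ρ.2, Subtype.ext_iff]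

end FreqReps

-- The OEP conditions, with `S = Sp / Sq` and `q_ℓ = qn ℓ / qd ℓ`.
def OEPConditions (M : Matrix (Fin n) (Fin n) ℤ) (Γstar : Finset (Fin n → ℝ))
    (Sp Sq : (Fin n → ℝ) → ℝ) (τ : (Fin n → ℝ) → ℂ) {r : ℕ}
    (qn qd : Fin r → (Fin n → ℝ) → ℂ) : Prop :=
  ∀ γ ∈ Γstar, ∀ ω : Fin n → ℝ,
    Sq (MT M ω) ≠ 0 → Sq ω ≠ 0 →
    (∀ ℓ, qd ℓ ω ≠ 0 ∧ qd ℓ (ω + γ) ≠ 0) →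
    (γ = 0 →
      ((Sp (MT M ω) / Sq (MT M ω) : ℝ) : ℂ) * τ ω * (starRingEnd ℂ) (τ (ω + γ))
          + ∑ ℓ, (qn ℓ ω / qd ℓ ω) * (starRingEnd ℂ) (qn ℓ (ω + γ) / qd ℓ (ω + γ))
        = ((Sp ω / Sq ω : ℝ) : ℂ)) ∧
    (γ ≠ 0 →
      ((Sp (MT M ω) / Sq (MT M ω) : ℝ) : ℂ) * τ ω * (starRingEnd ℂ) (τ (ω + γ))
          + ∑ ℓ, (qn ℓ ω / qd ℓ ω) * (starRingEnd ℂ) (qn ℓ (ω + γ) / qd ℓ (ω + γ))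
        = 0)

theorem OEPConditions.sum_le_of_ne_zero {M : Matrix (Fin n) (Fin n) ℤ}
    {Γ : Finset (Fin n → ℝ)} {Sp Sq : (Fin n → ℝ) → ℝ} {τ : (Fin n → ℝ) → ℂ} {r : ℕ}
    {qn qd : Fin r → (Fin n → ℝ) → ℂ} (hOEP : OEPConditions M Γ Sp Sq τ qn qd)
    (hM : IsUnit (M.map (Int.cast : ℤ → ℝ)).det) (hΓ : FreqReps M Γ)
    (hSp : IsTwoPiPeriodic Sp) (hSq : IsTwoPiPeriodic Sq)
    (hSnn : ∀ ω, Sq ω ≠ 0 → 0 ≤ Sp ω / Sq ω) (hτ : IsTwoPiPeriodic τ)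
    (hqn : ∀ ℓ, IsTwoPiPeriodic (qn ℓ)) (hqd : ∀ ℓ, IsTwoPiPeriodic (qd ℓ))
    {ω : Fin n → ℝ} (hMTq : Sq (MT M ω) ≠ 0) (hMTp : Sp (MT M ω) ≠ 0)
    (hS : ∀ γ ∈ Γ, Sq (ω + γ) ≠ 0 ∧ Sp (ω + γ) ≠ 0)
    (hqd_ne : ∀ ℓ, ∀ c ∈ Γ + Γ, qd ℓ (ω + c) ≠ 0) :
    ∑ γ ∈ Γ, ‖τ (ω + γ)‖ ^ 2 / (Sp (ω + γ) / Sq (ω + γ)) ≤ Sq (MT M ω) / Sp (MT M ω) := by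
  have hpos : ∀ v, Sq v ≠ 0 → Sp v ≠ 0 → 0 < Sp v / Sq v := fun v hq hp =>
    (hSnn v hq).lt_of_ne (div_ne_zero hp hq).symm
  rw [← inv_div]
  refine hΓ.sum_norm_sq_div_le_inv_of_oep (s := fun v => Sp v / Sq v)
    (q := fun ℓ v => qn ℓ v / qd ℓ v) hτ (fun ℓ => (hqn ℓ).div (hqd ℓ)) (hpos _ hMTq hMTp)
    (fun γ hγ => hpos _ (hS γ hγ).1 (hS γ hγ).2) fun γ hγ δ hδ => ?_
  obtain ⟨m, hm⟩ := hΓ.MT_eq_twoPiIntVec hM hγ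
  have hMT : MT M (ω + γ) = MT M ω + twoPiIntVec m := by rw [MT, mulVec_add, ← hm]; rfl
  have hqd_ne' : ∀ ℓ, qd ℓ (ω + γ) ≠ 0 ∧ qd ℓ (ω + γ + δ) ≠ 0 := fun ℓ =>
    ⟨by simpa using hqd_ne ℓ _ (Finset.add_mem_add hγ hΓ.1),
      by simpa [add_assoc] using hqd_ne ℓ _ (Finset.add_mem_add hγ hδ)⟩
  have h := hOEP δ hδ (ω + γ) (by rwa [hMT, hSq m]) (hS γ hγ).1 hqd_ne'
  rw [hMT, hSp m, hSq m] at h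
  split_ifs with h0
  exacts [h.1 h0, h.2 h0]

end

theorem oep_implies_oblique_subQMF_general (n : ℕ) (M : Matrix (Fin n) (Fin n) ℤ)
    (hdil : IsDilation M)
    (Γstar : Finset (Fin n → ℝ)) (hΓstar : FreqReps M Γstar)
    (Sp Sq : (Fin n → ℝ) → ℝ) (hSp : IsTrigPolyR Sp) (hSq : IsTrigPolyR Sq)
    (hSnn : ∀ ω, Sq ω ≠ 0 → 0 ≤ Sp ω / Sq ω)
    (τ : (Fin n → ℝ) → ℂ) (hτ : IsTrigPoly τ)
    (r : ℕ) (qn qd : Fin r → (Fin n → ℝ) → ℂ)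
    (hqn : ∀ ℓ, IsTrigPoly (qn ℓ)) (hqd : ∀ ℓ, IsTrigPoly (qd ℓ))
    (hqd0 : ∀ ℓ, ∃ ω, qd ℓ ω ≠ 0)
    (hOEP : ∀ γ ∈ Γstar, ∀ ω : Fin n → ℝ,
      Sq (MT M ω) ≠ 0 → Sq ω ≠ 0 →
      (∀ ℓ, qd ℓ ω ≠ 0 ∧ qd ℓ (ω + γ) ≠ 0) →
      (γ = 0 →
        ((Sp (MT M ω) / Sq (MT M ω) : ℝ) : ℂ) * τ ω * (starRingEnd ℂ) (τ (ω + γ))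
            + ∑ ℓ, (qn ℓ ω / qd ℓ ω) * (starRingEnd ℂ) (qn ℓ (ω + γ) / qd ℓ (ω + γ))
          = ((Sp ω / Sq ω : ℝ) : ℂ)) ∧
      (γ ≠ 0 →
        ((Sp (MT M ω) / Sq (MT M ω) : ℝ) : ℂ) * τ ω * (starRingEnd ℂ) (τ (ω + γ))
            + ∑ ℓ, (qn ℓ ω / qd ℓ ω) * (starRingEnd ℂ) (qn ℓ (ω + γ) / qd ℓ (ω + γ))
          = 0)) :
    ∀ ω : Fin n → ℝ, Sq (MT M ω) ≠ 0 → Sp (MT M ω) ≠ 0 →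
      (∀ γ ∈ Γstar, Sq (ω + γ) ≠ 0 ∧ Sp (ω + γ) ≠ 0) →
      ∑ γ ∈ Γstar, ‖τ (ω + γ)‖ ^ 2 / (Sp (ω + γ) / Sq (ω + γ))
        ≤ Sq (MT M ω) / Sp (MT M ω) := by
  intro ω hMTq hMTp hS
  have hMT : Continuous (MT M) := continuous_const.matrix_mulVec continuous_id
  have hSp' := hSp.continuous
  have hSq' := hSq.continuous
  have hτ' := hτ.continuous
  have hnear : ∀ᶠ ω' in 𝓝 ω, Sq (MT M ω') ≠ 0 ∧ Sp (MT M ω') ≠ 0 ∧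
      ∀ γ ∈ Γstar, Sq (ω' + γ) ≠ 0 ∧ Sp (ω' + γ) ≠ 0 :=
    ((hSq'.comp hMT).continuousAt.eventually_ne hMTq).and <|
      ((hSp'.comp hMT).continuousAt.eventually_ne hMTp).and <|
        (eventually_all_finset Γstar).mpr fun γ hγ =>
          ((hSq'.comp (continuous_add_const γ)).continuousAt.eventually_ne (hS γ hγ).1).and
            ((hSp'.comp (continuous_add_const γ)).continuousAt.eventually_ne (hS γ hγ).2)
  apply le_of_continuousAt_of_dense (x := ω)
    (dense_setOf_forall_trigPoly_add_ne_zero hqd hqd0 (Γstar + Γstar))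
  · exact tendsto_finsetSum _ fun γ hγ => show ContinuousAt _ ω by
      fun_prop (disch := first | exact (hS γ hγ).1 | exact div_ne_zero (hS γ hγ).2 (hS γ hγ).1)
  · exact (hSq'.comp hMT).continuousAt.div (hSp'.comp hMT).continuousAt hMTp
  · filter_upwards [hnear] with ω' ⟨hq', hp', hS'⟩ hD
    exact OEPConditions.sum_le_of_ne_zero hOEP hdil.isUnit_det hΓstar hSp.isTwoPiPeriodic
      hSq.isTwoPiPeriodic hSnn hτ.isTwoPiPeriodic (fun ℓ => (hqn ℓ).isTwoPiPeriodic)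
      (fun ℓ => (hqd ℓ).isTwoPiPeriodic) hq' hp' hS' hD

/-- **OEP conditions imply the oblique sub-QMF condition.** If rational
trigonometric polynomial highpass masks `q_ℓ` satisfy the OEP conditions with the
trigonometric polynomial lowpass mask `τ` and the nonzero nonnegative rational
trigonometric polynomial vmr function `S = Sp/Sq`, then
`Σ_{γ∈Γ*} |τ(ω+γ)|²/S(ω+γ) ≤ 1/S(Mᵀω)` wherever both sides are defined. -/
theorem oep_implies_oblique_subQMF (n : ℕ) (M : Matrix (Fin n) (Fin n) ℤ)
    (hdil : IsDilation M)
    (Γstar : Finset (Fin n → ℝ)) (hΓstar : FreqReps M Γstar)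
    (Sp Sq : (Fin n → ℝ) → ℝ) (hSp : IsTrigPolyR Sp) (hSq : IsTrigPolyR Sq)
    (hq0 : ∃ ω, Sq ω ≠ 0) (hSnz : ∃ ω, Sq ω ≠ 0 ∧ Sp ω ≠ 0)
    (hSnn : ∀ ω, Sq ω ≠ 0 → 0 ≤ Sp ω / Sq ω)
    (τ : (Fin n → ℝ) → ℂ) (hτ : IsTrigPoly τ) (hτ0 : τ 0 = 1)
    (r : ℕ) (qn qd : Fin r → (Fin n → ℝ) → ℂ)
    (hqn : ∀ ℓ, IsTrigPoly (qn ℓ)) (hqd : ∀ ℓ, IsTrigPoly (qd ℓ))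
    (hqd0 : ∀ ℓ, ∃ ω, qd ℓ ω ≠ 0)
    (hOEP : ∀ γ ∈ Γstar, ∀ ω : Fin n → ℝ,
      Sq (MT M ω) ≠ 0 → Sq ω ≠ 0 →
      (∀ ℓ, qd ℓ ω ≠ 0 ∧ qd ℓ (ω + γ) ≠ 0) →
      (γ = 0 →
        ((Sp (MT M ω) / Sq (MT M ω) : ℝ) : ℂ) * τ ω * (starRingEnd ℂ) (τ (ω + γ))
            + ∑ ℓ, (qn ℓ ω / qd ℓ ω) * (starRingEnd ℂ) (qn ℓ (ω + γ) / qd ℓ (ω + γ))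
          = ((Sp ω / Sq ω : ℝ) : ℂ)) ∧
      (γ ≠ 0 →
        ((Sp (MT M ω) / Sq (MT M ω) : ℝ) : ℂ) * τ ω * (starRingEnd ℂ) (τ (ω + γ))
            + ∑ ℓ, (qn ℓ ω / qd ℓ ω) * (starRingEnd ℂ) (qn ℓ (ω + γ) / qd ℓ (ω + γ))
          = 0)) :
    ∀ ω : Fin n → ℝ, Sq (MT M ω) ≠ 0 → Sp (MT M ω) ≠ 0 →
      (∀ γ ∈ Γstar, Sq (ω + γ) ≠ 0 ∧ Sp (ω + γ) ≠ 0) →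
      ∑ γ ∈ Γstar, ‖τ (ω + γ)‖ ^ 2 / (Sp (ω + γ) / Sq (ω + γ))
        ≤ Sq (MT M ω) / Sp (MT M ω) :=
  oep_implies_oblique_subQMF_general n M hdil Γstar hΓstar Sp Sq hSp hSq hSnn τ hτ r qn qd hqn hqd
    hqd0 hOEP
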